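/- Let M and N be positive real numbers, and let S be the set of monic cubic polynomials f(T) = T^3 + mT + n with integer coefficients m, n satisfying |m| ≤ M, |n| ≤ N, such that f(T) is irreducible over ℚ and the discriminant D(f) = −(4m^3 + 27n^2) is not a perfect square in ℤ. Then there is an absolute constant c > 0 such that |S| ≥ c·M·N for all sufficiently large M and N. -/
import Mathlib

open Polynomial IntermediateField NumberField Set

instance : Fact (Nat.Prime 5) := ⟨by norm_num⟩
instance : Fact (Nat.Prime 7) := ⟨by norm_num⟩

lemma irr_zmod5 : Irreducible (X ^ 3 + C (1 : ZMod 5) * X + C (1 : ZMod 5)) := by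
  set g : (ZMod 5)[X] := X ^ 3 + C (1 : ZMod 5) * X + C 1 with hg
  have hd : g.natDegree = 3 := by rw [hg]; compute_degree!
  rw [irreducible_iff_roots_eq_zero_of_degree_le_three (by omega) (by omega)]
  have hg0 : g ≠ 0 := fun h => by simp [h] at hd
  rw [Multiset.eq_zero_iff_forall_notMem]
  intro x hx
  rw [mem_roots hg0] at hx
  simp only [hg, IsRoot, eval_add, eval_pow, eval_mul, eval_X, eval_C, one_mul] at hx
  revert hx
  revert x
  decide

lemma key (a b : ℤ) (ha : a % 35 = 1) (hb : b % 35 = 21) :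
    Irreducible (X ^ 3 + C (a : ℚ) * X + C (b : ℚ)) ∧
      ¬ IsSquare (-(4 * a ^ 3 + 27 * b ^ 2)) := by
  have ha5 : (a : ZMod 5) = 1 := by
    have : a ≡ 1 [ZMOD 5] := by unfold Int.ModEq; omega
    exact_mod_cast (ZMod.intCast_eq_intCast_iff _ _ _).mpr this
  have hb5 : (b : ZMod 5) = 1 := by
    have : b ≡ 1 [ZMOD 5] := by unfold Int.ModEq; omega
    exact_mod_cast (ZMod.intCast_eq_intCast_iff _ _ _).mpr this
  have ha7 : (a : ZMod 7) = 1 := by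
    have : a ≡ 1 [ZMOD 7] := by unfold Int.ModEq; omega
    exact_mod_cast (ZMod.intCast_eq_intCast_iff _ _ _).mpr this
  have hb7 : (b : ZMod 7) = 0 := by
    have : b ≡ 0 [ZMOD 7] := by unfold Int.ModEq; omega
    exact_mod_cast (ZMod.intCast_eq_intCast_iff _ _ _).mpr this
  set f : ℤ[X] := X ^ 3 + C a * X + C b with hf
  have hmon : f.Monic := by
    have : f = X ^ 3 + (C a * X + C b) := by rw [hf]; ring
    rw [this]
    exact monic_X_pow_add (lt_of_le_of_lt degree_linear_le (by norm_num))
  constructor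
  · have hirr : Irreducible f := by
      apply hmon.irreducible_of_irreducible_map (Int.castRingHom (ZMod 5))
      have : f.map (Int.castRingHom (ZMod 5)) = X ^ 3 + C (1 : ZMod 5) * X + C 1 := by
        simp only [hf, Polynomial.map_add, Polynomial.map_mul, Polynomial.map_pow,
          Polynomial.map_X, Polynomial.map_C]
        rw [show (Int.castRingHom (ZMod 5)) a = 1 from ha5,
          show (Int.castRingHom (ZMod 5)) b = 1 from hb5]
      rw [this]
      exact irr_zmod5
    have := (IsPrimitive.Int.irreducible_iff_irreducible_map_cast hmon.isPrimitive).mp hirr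
    have hmap : f.map (Int.castRingHom ℚ) = X ^ 3 + C (a : ℚ) * X + C (b : ℚ) := by
      simp [hf, Polynomial.map_add, Polynomial.map_mul, Polynomial.map_pow, map_C]
    rwa [hmap] at this
  · rintro ⟨r, hr⟩
    have := congrArg (fun z : ℤ => (z : ZMod 7)) hr
    push_cast at this
    rw [ha7, hb7] at this
    norm_num at this
    exact (by decide : ¬ IsSquare ((3:ZMod 7))) ⟨(r : ZMod 7), by rw [← this]; decide⟩

/-- The number of monic cubic polynomials `T³ + mT + n` with `|m| ≤ M`, `|n| ≤ N`,
irreducible over `ℚ` and with non-square discriminant, is `≫ M · N`. -/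
theorem irreducible_cubic_count_lower_bound :
    ∃ c : ℝ, 0 < c ∧ ∃ M₀ N₀ : ℝ, ∀ M N : ℝ, M₀ ≤ M → N₀ ≤ N →
      c * M * N ≤
        (({q : ℤ × ℤ | |(q.1 : ℝ)| ≤ M ∧ |(q.2 : ℝ)| ≤ N ∧
            Irreducible (X ^ 3 + C (q.1 : ℚ) * X + C (q.2 : ℚ)) ∧
            ¬ IsSquare (-(4 * q.1 ^ 3 + 27 * q.2 ^ 2))} : Set (ℤ × ℤ)).ncard : ℝ) := by
  refine ⟨1/4900, by norm_num, 70, 70, fun M N hM hN => ?_⟩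
  set S : Set (ℤ × ℤ) := {q : ℤ × ℤ | |(q.1 : ℝ)| ≤ M ∧ |(q.2 : ℝ)| ≤ N ∧
            Irreducible (X ^ 3 + C (q.1 : ℚ) * X + C (q.2 : ℚ)) ∧
            ¬ IsSquare (-(4 * q.1 ^ 3 + 27 * q.2 ^ 2))} with hS
  have hSfin : S.Finite := by
    apply Set.Finite.subset ((Set.finite_Icc (-⌈M⌉) ⌈M⌉).prod (Set.finite_Icc (-⌈N⌉) ⌈N⌉))
    rintro ⟨m, n⟩ ⟨h1, h2, -, -⟩
    rw [abs_le] at h1 h2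
    constructor
    · constructor
      · have : (((-⌈M⌉ : ℤ)) : ℝ) ≤ (m : ℝ) := le_trans (by push_cast; linarith [Int.le_ceil M]) h1.1
        exact_mod_cast this
      · exact_mod_cast le_trans h1.2 (Int.le_ceil M)
    · constructor
      · have : (((-⌈N⌉ : ℤ)) : ℝ) ≤ (n : ℝ) := le_trans (by push_cast; linarith [Int.le_ceil N]) h2.1
        exact_mod_cast this
      · exact_mod_cast le_trans h2.2 (Int.le_ceil N)
  set kM : ℕ := (⌊M/35⌋).toNat with hkM
  set lN : ℕ := (⌊N/35⌋).toNat with hlN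
  have hkMr : (kM : ℝ) = (⌊M/35⌋ : ℤ) := by
    rw [hkM]; norm_cast
    exact Int.toNat_of_nonneg (Int.floor_nonneg.mpr (by linarith))
  have hlNr : (lN : ℝ) = (⌊N/35⌋ : ℤ) := by
    rw [hlN]; norm_cast
    exact Int.toNat_of_nonneg (Int.floor_nonneg.mpr (by linarith))
  have hkM1 : M/70 ≤ (kM : ℝ) := by
    rw [hkMr]
    have := Int.sub_one_lt_floor (M/35)
    linarith
  have hlN1 : N/70 ≤ (lN : ℝ) := by
    rw [hlNr]
    have := Int.sub_one_lt_floor (N/35)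
    linarith
  have hkM2 : 35 * (kM : ℝ) ≤ M := by
    rw [hkMr]; have := Int.floor_le (M/35); linarith
  have hlN2 : 35 * (lN : ℝ) ≤ N := by
    rw [hlNr]; have := Int.floor_le (N/35); linarith
  set φ : ℕ × ℕ → ℤ × ℤ := fun p => (1 + 35 * (p.1 : ℤ), 21 + 35 * (p.2 : ℤ)) with hφ
  have hinj : Function.Injective φ := by
    rintro ⟨i, j⟩ ⟨i', j'⟩ h
    rw [hφ, Prod.mk.injEq] at h
    obtain ⟨h1, h2⟩ := h
    simp only [Prod.mk.injEq]
    omega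
  set F : Finset (ℤ × ℤ) := ((Finset.range kM) ×ˢ (Finset.range lN)).image φ with hF
  have hcard : F.card = kM * lN := by
    rw [hF, Finset.card_image_of_injective _ hinj, Finset.card_product,
      Finset.card_range, Finset.card_range]
  have hsub : (F : Set (ℤ × ℤ)) ⊆ S := by
    rintro ⟨m, n⟩ hx
    simp only [hF, Finset.coe_image, Finset.coe_product, Set.mem_image,
      Set.mem_prod, Finset.mem_coe, Finset.mem_range] at hx
    obtain ⟨⟨i, j⟩, ⟨hi, hj⟩, heq⟩ := hx
    rw [hφ, Prod.mk.injEq] at heq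
    obtain ⟨hm, hn⟩ := heq
    have hm35 : m % 35 = 1 := by omega
    have hn35 : n % 35 = 21 := by omega
    obtain ⟨hirr, hsq⟩ := key m n hm35 hn35
    refine ⟨?_, ?_, hirr, hsq⟩
    · rw [abs_le]
      have hi' : (i : ℝ) ≤ (kM : ℝ) - 1 := by
        have : (i : ℝ) + 1 ≤ kM := by exact_mod_cast hi
        linarith
      have hmr : (m : ℝ) = 1 + 35 * i := by rw [← hm]; push_cast; ring
      have hi0 : (0:ℝ) ≤ (i:ℝ) := Nat.cast_nonneg i
      constructor
      · rw [hmr]; linarith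
      · rw [hmr]; linarith
    · rw [abs_le]
      have hj' : (j : ℝ) ≤ (lN : ℝ) - 1 := by
        have : (j : ℝ) + 1 ≤ lN := by exact_mod_cast hj
        linarith
      have hnr : (n : ℝ) = 21 + 35 * j := by rw [← hn]; push_cast; ring
      have hj0 : (0:ℝ) ≤ (j:ℝ) := Nat.cast_nonneg j
      constructor
      · rw [hnr]; linarith
      · rw [hnr]; linarith
  have hle : (F.card : ℝ) ≤ (S.ncard : ℝ) := by
    have := Set.ncard_le_ncard hsub hSfin
    rw [Set.ncard_coe_finset] at this
    exact_mod_cast this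
  rw [hcard] at hle
  push_cast at hle
  have hM0 : (0:ℝ) ≤ M := by linarith
  have hN0 : (0:ℝ) ≤ N := by linarith
  have : 1/4900 * M * N ≤ (kM : ℝ) * (lN : ℝ) := by
    have h1 : M/70 * (N/70) ≤ (kM : ℝ) * (lN : ℝ) :=
      mul_le_mul hkM1 hlN1 (by linarith) (by linarith)
    nlinarith
  linarith
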